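/- For all a ∈ (0,1/2] and r ∈ (0,1): a²[4(𝔈(r) - (1-r²)𝔎(r)) - πr²] ≤ 𝔈_a(r) - (1-r²)𝔎_a(r) - (π/2)ar² ≤ (π/2)a²(r² + 2(1-r²)log√(1-r²)), where 𝔎_a(r) = (π/2)F(a,1-a;1;r²) and 𝔈_a(r) = (π/2)F(a-1,1-a;1;r²) are the generalized elliptic integrals of the first and second kinds, and 𝔎 = 𝔎_{1/2}, 𝔈 = 𝔈_{1/2}. -/

import Mathlib

/-- The Gaussian hypergeometric function ₂F₁(a,b;c;x) as a power series. -/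
noncomputable def hypergeom (a b c x : ℝ) : ℝ :=
  ∑' n : ℕ, ((ascPochhammer ℝ n).eval a * (ascPochhammer ℝ n).eval b) /
    ((ascPochhammer ℝ n).eval c * n.factorial) * x ^ n

/-- Generalized elliptic integral of the first kind. -/
noncomputable def Ka (a r : ℝ) : ℝ := Real.pi / 2 * hypergeom a (1 - a) 1 (r ^ 2)

/-- Generalized elliptic integral of the second kind. -/
noncomputable def Ea (a r : ℝ) : ℝ := Real.pi / 2 * hypergeom (a - 1) (1 - a) 1 (r ^ 2)

namespace Stmt18Aux

/-- Pochhammer evaluation shorthand. -/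
noncomputable def P (a : ℝ) (n : ℕ) : ℝ := (ascPochhammer ℝ n).eval a

lemma P_zero (a : ℝ) : P a 0 = 1 := by simp [P]

lemma P_succ (a : ℝ) (n : ℕ) : P a (n + 1) = P a n * (a + n) :=
  ascPochhammer_succ_eval n a

lemma P_pos {a : ℝ} (ha : 0 < a) (n : ℕ) : 0 < P a n :=
  ascPochhammer_pos n a ha

lemma P_succ_left (a : ℝ) (n : ℕ) : P a (n + 1) = a * P (a + 1) n := by
  induction n with
  | zero => simp [P_succ, P_zero]
  | succ n ih =>
      rw [P_succ, ih, P_succ]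
      push_cast
      ring

lemma P_abs_le {a : ℝ} (h1 : -1 ≤ a) (h2 : a ≤ 1) (n : ℕ) :
    |P a n| ≤ n.factorial := by
  induction n with
  | zero => simp [P_zero]
  | succ n ih =>
      rw [P_succ, abs_mul]
      have hb : |a + (n : ℝ)| ≤ (n : ℝ) + 1 := by
        rw [abs_le]
        constructor <;> [nlinarith [Nat.cast_nonneg (α := ℝ) n]; nlinarith]
      calc |P a n| * |a + (n : ℝ)| ≤ (n.factorial : ℝ) * ((n : ℝ) + 1) :=
            mul_le_mul ih hb (abs_nonneg _) (by positivity)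
        _ = ((n + 1).factorial : ℝ) := by
            push_cast [Nat.factorial_succ]; ring

lemma hasSum_shift {f : ℕ → ℝ} {S : ℝ} (h : HasSum f S) :
    HasSum (fun n => f (n + 1)) (S - f 0) := by
  refine (hasSum_nat_add_iff (f := f) 1).mpr ?_
  simpa using h

lemma hyp_hasSum {b c x : ℝ} (hb : ∀ n, |P b n| ≤ n.factorial)
    (hc : ∀ n, |P c n| ≤ n.factorial) (hx : |x| < 1) :
    HasSum (fun n : ℕ => P b n * P c n / ((n.factorial : ℝ) * n.factorial) * x ^ n)
      (hypergeom b c 1 x) := by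
  have hsum : Summable
      (fun n : ℕ => P b n * P c n / ((n.factorial : ℝ) * n.factorial) * x ^ n) := by
    apply Summable.of_norm_bounded
      (summable_geometric_of_lt_one (abs_nonneg x) hx)
    intro n
    have hf : (0 : ℝ) < n.factorial := by exact_mod_cast n.factorial_pos
    have h1 : ‖P b n * P c n / ((n.factorial : ℝ) * n.factorial) * x ^ n‖
        = |P b n| * |P c n| / ((n.factorial : ℝ) * n.factorial) * |x| ^ n := by
      rw [Real.norm_eq_abs, abs_mul, abs_div, abs_mul, abs_mul, abs_pow,
        Nat.abs_cast]
    rw [h1]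
    have h2 : |P b n| * |P c n| / ((n.factorial : ℝ) * n.factorial) ≤ 1 := by
      rw [div_le_one (by positivity)]
      exact mul_le_mul (hb n) (hc n) (abs_nonneg _)
        (le_trans (abs_nonneg _) (hb n))
    calc |P b n| * |P c n| / ((n.factorial : ℝ) * n.factorial) * |x| ^ n
        ≤ 1 * |x| ^ n := mul_le_mul_of_nonneg_right h2 (by positivity)
      _ = |x| ^ n := one_mul _
  have heq : hypergeom b c 1 x
      = ∑' n : ℕ, P b n * P c n / ((n.factorial : ℝ) * n.factorial) * x ^ n := by
    unfold hypergeom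
    exact tsum_congr fun n => by rw [ascPochhammer_eval_one]; rfl
  rw [heq]
  exact hsum.hasSum

lemma middle_hasSum {a x : ℝ} (ha0 : 0 < a) (ha1 : a < 1) (hx0 : 0 ≤ x) (hx1 : x < 1) :
    HasSum (fun n : ℕ => a * (P a (n + 1) * P (1 - a) (n + 1)) *
        (x ^ (n + 2) / (((n : ℝ) + 2) * (((n + 1).factorial : ℝ) * (n + 1).factorial))))
      (hypergeom (a - 1) (1 - a) 1 x - (1 - x) * hypergeom a (1 - a) 1 x - a * x) := by
  have hx' : |x| < 1 := by rwa [abs_of_nonneg hx0]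
  have hbA : ∀ n, |P (a - 1) n| ≤ n.factorial := P_abs_le (by linarith) (by linarith)
  have hbB : ∀ n, |P a n| ≤ n.factorial := P_abs_le (by linarith) (by linarith)
  have hbC : ∀ n, |P (1 - a) n| ≤ n.factorial := P_abs_le (by linarith) (by linarith)
  set S1 := hypergeom (a - 1) (1 - a) 1 x with hS1
  set S2 := hypergeom a (1 - a) 1 x with hS2
  set A : ℕ → ℝ := fun n => P (a - 1) n * P (1 - a) n / ((n.factorial : ℝ) * n.factorial) * x ^ n with hA
  set B : ℕ → ℝ := fun n => P a n * P (1 - a) n / ((n.factorial : ℝ) * n.factorial) * x ^ n with hB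
  have H1 : HasSum A S1 := hyp_hasSum hbA hbC hx'
  have H2 : HasSum B S2 := hyp_hasSum hbB hbC hx'
  have Hsub : HasSum (fun n => A n - B n) (S1 - S2) := H1.sub H2
  have h00 : A 0 - B 0 = 0 := by simp [hA, hB, P_zero]
  have Hshift : HasSum (fun n => A (n + 1) - B (n + 1)) (S1 - S2 - (A 0 - B 0)) :=
    hasSum_shift (f := fun n => A n - B n) Hsub
  rw [h00, sub_zero] at Hshift
  have H3 : HasSum (fun n => x * B n) (x * S2) := H2.mul_left x
  have H4 : HasSum (fun n => (A (n + 1) - B (n + 1)) + x * B n) (S1 - S2 + x * S2) :=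
    Hshift.add H3
  set g : ℕ → ℝ := fun n => a * (P a n * P (1 - a) n) *
      (x ^ (n + 1) / (((n : ℝ) + 1) * ((n.factorial : ℝ) * n.factorial))) with hg
  have key : (fun n : ℕ => (A (n + 1) - B (n + 1)) + x * B n) = g := by
    funext n
    have e1 : P (a - 1) (n + 1) = (a - 1) * P a n := by
      have h : a - 1 + 1 = a := by ring
      rw [P_succ_left, h]
    have e2 : P (1 - a) (n + 1) = P (1 - a) n * (1 - a + n) := P_succ _ _
    have e3 : P a (n + 1) = P a n * (a + n) := P_succ _ _
    have hfac : ((n + 1).factorial : ℝ) = ((n : ℝ) + 1) * n.factorial := by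
      push_cast [Nat.factorial_succ]; ring
    have hne1 : ((n : ℝ) + 1) ≠ 0 := by positivity
    have hne2 : ((n.factorial : ℝ)) ≠ 0 := by positivity
    simp only [hA, hB, hg, e1, e2, e3, hfac]
    field_simp
    ring
  rw [key] at H4
  have g0 : g 0 = a * x := by
    simp [hg, P_zero]
  have H5 : HasSum (fun n => g (n + 1)) (S1 - S2 + x * S2 - g 0) :=
    hasSum_shift (f := g) H4
  rw [g0] at H5
  have hfun : (fun n : ℕ => g (n + 1)) = fun n : ℕ =>
      a * (P a (n + 1) * P (1 - a) (n + 1)) *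
        (x ^ (n + 2) / (((n : ℝ) + 2) * (((n + 1).factorial : ℝ) * (n + 1).factorial))) := by
    funext n
    simp only [hg]
    push_cast
    ring_nf
  rw [hfun] at H5
  have hval : S1 - S2 + x * S2 - a * x = S1 - (1 - x) * S2 - a * x := by ring
  rw [hval] at H5
  exact H5

lemma log_series {x : ℝ} (hx0 : 0 ≤ x) (hx1 : x < 1) :
    HasSum (fun n : ℕ => x ^ (n + 2) / (((n : ℝ) + 1) * ((n : ℝ) + 2)))
      (x + (1 - x) * Real.log (1 - x)) := by
  have hx' : |x| < 1 := by rwa [abs_of_nonneg hx0]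
  have H := Real.hasSum_pow_div_log_of_abs_lt_one hx'
  have H1 : HasSum (fun n : ℕ => x * (x ^ (n + 1) / ((n : ℝ) + 1)))
      (x * (-Real.log (1 - x))) := H.mul_left x
  have H2 : HasSum (fun n : ℕ => x ^ (n + 2) / ((n : ℝ) + 2))
      (-Real.log (1 - x) - x) := by
    have h := hasSum_shift (f := fun n : ℕ => x ^ (n + 1) / ((n : ℝ) + 1)) H
    have hfun : (fun n : ℕ => x ^ (n + 1 + 1) / (((n + 1 : ℕ) : ℝ) + 1))
        = fun n : ℕ => x ^ (n + 2) / ((n : ℝ) + 2) := by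
      funext n; push_cast; ring
    have hval : -Real.log (1 - x) - x ^ (0 + 1) / (((0 : ℕ) : ℝ) + 1)
        = -Real.log (1 - x) - x := by norm_num
    rw [hfun, hval] at h
    exact h
  have H3 := H1.sub H2
  have hfun : (fun n : ℕ => x * (x ^ (n + 1) / ((n : ℝ) + 1)) - x ^ (n + 2) / ((n : ℝ) + 2))
      = fun n : ℕ => x ^ (n + 2) / (((n : ℝ) + 1) * ((n : ℝ) + 2)) := by
    funext n
    have h1 : ((n : ℝ) + 1) ≠ 0 := by positivity
    have h2 : ((n : ℝ) + 2) ≠ 0 := by positivity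
    field_simp
    ring
  rw [hfun] at H3
  have hval : x * (-Real.log (1 - x)) - (-Real.log (1 - x) - x)
      = x + (1 - x) * Real.log (1 - x) := by ring
  rwa [hval] at H3

/-- Upper combinatorial bound: `(n+1) C_{n+1} ≤ a (n+1-a) n! (n+1)!`. -/
lemma upper_claim {a : ℝ} (ha0 : 0 < a) (ha1 : a ≤ 1 / 2) (n : ℕ) :
    ((n : ℝ) + 1) * (P a (n + 1) * P (1 - a) (n + 1))
      ≤ a * (((n : ℝ) + 1) - a) * n.factorial * (n + 1).factorial := by
  induction n with
  | zero =>
      simp [P_succ, P_zero]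
  | succ n ih =>
      have hCpos : 0 < P a (n + 1) * P (1 - a) (n + 1) :=
        mul_pos (P_pos ha0 _) (P_pos (by linarith) _)
      have hfpos : (0 : ℝ) < n.factorial := by exact_mod_cast n.factorial_pos
      have hf1pos : (0 : ℝ) < (n + 1).factorial := by exact_mod_cast (n + 1).factorial_pos
      have hnn : (0 : ℝ) ≤ (n : ℝ) := Nat.cast_nonneg n
      have aux1 : P a (n + 1) * P (1 - a) (n + 1) ≤ a * n.factorial * (n + 1).factorial := by
        nlinarith [ih, mul_pos hfpos hf1pos]
      have aux2 : (a + ((n : ℝ) + 1)) * (P a (n + 1) * P (1 - a) (n + 1))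
          ≤ a * (n + 1).factorial * (n + 1).factorial := by
        have h1 : a * (P a (n + 1) * P (1 - a) (n + 1))
            ≤ a * (a * n.factorial * (n + 1).factorial) :=
          mul_le_mul_of_nonneg_left aux1 ha0.le
        have hfac1 : ((n + 1).factorial : ℝ) = ((n : ℝ) + 1) * n.factorial := by
          push_cast [Nat.factorial_succ]; ring
        nlinarith [ih, h1]
      have e3 : P a (n + 1 + 1) = P a (n + 1) * (a + ((n : ℝ) + 1)) := by
        rw [P_succ]; push_cast; ring
      have e4 : P (1 - a) (n + 1 + 1) = P (1 - a) (n + 1) * (1 - a + ((n : ℝ) + 1)) := by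
        rw [P_succ]; push_cast; ring
      have hfac2 : ((n + 1 + 1).factorial : ℝ) = ((n : ℝ) + 2) * (n + 1).factorial := by
        push_cast [Nat.factorial_succ]; ring
      have hposmul : (0 : ℝ) ≤ ((n : ℝ) + 2) * (((n : ℝ) + 2) - a) := by nlinarith
      have hstep := mul_le_mul_of_nonneg_left aux2 hposmul
      push_cast
      calc ((n : ℝ) + 1 + 1) * (P a (n + 1 + 1) * P (1 - a) (n + 1 + 1))
          = ((n : ℝ) + 2) * (((n : ℝ) + 2) - a) *
            ((a + ((n : ℝ) + 1)) * (P a (n + 1) * P (1 - a) (n + 1))) := by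
            rw [e3, e4]; ring
        _ ≤ ((n : ℝ) + 2) * (((n : ℝ) + 2) - a) *
            (a * (n + 1).factorial * (n + 1).factorial) := hstep
        _ = a * (((n : ℝ) + 1 + 1) - a) * (n + 1).factorial * (n + 1 + 1).factorial := by
            rw [hfac2]; ring

/-- Lower combinatorial bound. -/
lemma lower_claim {a : ℝ} (ha0 : 0 < a) (ha1 : a ≤ 1 / 2) (n : ℕ) :
    4 * (a * (1 - a)) * ((((n : ℝ) + 1) - (1 / 2 - a) ^ 2 * n)) * (P (1 / 2) (n + 1)) ^ 2
      ≤ ((n : ℝ) + 1) * (P a (n + 1) * P (1 - a) (n + 1)) := by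
  induction n with
  | zero =>
      simp [P_succ, P_zero]
      nlinarith
  | succ n ih =>
      have hCpos : 0 < P a (n + 1) * P (1 - a) (n + 1) :=
        mul_pos (P_pos ha0 _) (P_pos (by linarith) _)
      have hDpos : 0 < (P (1 / 2) (n + 1)) ^ 2 := by
        have := P_pos (show (0:ℝ) < 1/2 by norm_num) (n + 1)
        positivity
      have htpos : 0 < a * (1 - a) := by nlinarith
      have hnn : (0 : ℝ) ≤ (n : ℝ) := Nat.cast_nonneg n
      have e3 : P a (n + 1 + 1) = P a (n + 1) * (a + ((n : ℝ) + 1)) := by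
        rw [P_succ]; push_cast; ring
      have e4 : P (1 - a) (n + 1 + 1) = P (1 - a) (n + 1) * (1 - a + ((n : ℝ) + 1)) := by
        rw [P_succ]; push_cast; ring
      have e5 : P (1/2) (n + 1 + 1) = P (1/2) (n + 1) * (1/2 + ((n : ℝ) + 1)) := by
        rw [P_succ]; push_cast; ring
      have hfacpos : (0 : ℝ) ≤ ((n : ℝ) + 2) * (((n : ℝ) + 1) * ((n : ℝ) + 2) + a * (1 - a)) := by
        have h2 : (0:ℝ) < ((n : ℝ) + 1) * ((n : ℝ) + 2) := by positivity
        have h3 : (0:ℝ) < ((n : ℝ) + 1) * ((n : ℝ) + 2) + a * (1 - a) := by linarith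
        positivity
      have key2 : 4 * (a * (1 - a)) * (P (1/2) (n + 1)) ^ 2 * (((n : ℝ) + 2)
            * (((n : ℝ) + 1) * ((n : ℝ) + 2) + a * (1 - a))
            * (((n : ℝ) + 1) - (1/2 - a) ^ 2 * n))
          ≤ ((n : ℝ) + 1 + 1) * (P a (n + 1 + 1) * P (1 - a) (n + 1 + 1)) * ((n : ℝ) + 1) := by
        calc 4 * (a * (1 - a)) * (P (1/2) (n + 1)) ^ 2 * (((n : ℝ) + 2)
              * (((n : ℝ) + 1) * ((n : ℝ) + 2) + a * (1 - a))
              * (((n : ℝ) + 1) - (1/2 - a) ^ 2 * n))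
            = (((n : ℝ) + 2) * (((n : ℝ) + 1) * ((n : ℝ) + 2) + a * (1 - a))) *
              (4 * (a * (1 - a)) * (((n : ℝ) + 1) - (1/2 - a) ^ 2 * n)
                * (P (1/2) (n + 1)) ^ 2) := by ring
          _ ≤ (((n : ℝ) + 2) * (((n : ℝ) + 1) * ((n : ℝ) + 2) + a * (1 - a))) *
              (((n : ℝ) + 1) * (P a (n + 1) * P (1 - a) (n + 1))) :=
              mul_le_mul_of_nonneg_left ih hfacpos
          _ = ((n : ℝ) + 1 + 1) * (P a (n + 1 + 1) * P (1 - a) (n + 1 + 1)) * ((n : ℝ) + 1) := by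
              rw [e3, e4]; ring
      have key1 : 4 * (a * (1 - a)) * ((((n : ℝ) + 1 + 1) - (1/2 - a) ^ 2 * ((n : ℝ) + 1)))
            * (P (1/2) (n + 1 + 1)) ^ 2 * ((n : ℝ) + 1)
          ≤ 4 * (a * (1 - a)) * (P (1/2) (n + 1)) ^ 2 * (((n : ℝ) + 2)
            * (((n : ℝ) + 1) * ((n : ℝ) + 2) + a * (1 - a))
            * (((n : ℝ) + 1) - (1/2 - a) ^ 2 * n)) := by
        have hdiff : 4 * (a * (1 - a)) * (P (1/2) (n + 1)) ^ 2 * (((n : ℝ) + 2)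
              * (((n : ℝ) + 1) * ((n : ℝ) + 2) + a * (1 - a))
              * (((n : ℝ) + 1) - (1/2 - a) ^ 2 * n))
            - 4 * (a * (1 - a)) * ((((n : ℝ) + 1 + 1) - (1/2 - a) ^ 2 * ((n : ℝ) + 1)))
              * ((P (1/2) (n + 1)) * (1/2 + ((n : ℝ) + 1))) ^ 2 * ((n : ℝ) + 1)
            = 4 * (a * (1 - a)) * (P (1/2) (n + 1)) ^ 2 *
              ((1/2 - a) ^ 2 / 4 + (1/2 - a) ^ 4 * ((n : ℝ) * ((n : ℝ) + 2))) := by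
          ring
        have hnonneg : (0:ℝ) ≤ 4 * (a * (1 - a)) * (P (1/2) (n + 1)) ^ 2 *
            ((1/2 - a) ^ 2 / 4 + (1/2 - a) ^ 4 * ((n : ℝ) * ((n : ℝ) + 2))) := by positivity
        rw [e5]
        linarith [hdiff, hnonneg]
      have hn1pos : (0 : ℝ) < (n : ℝ) + 1 := by positivity
      have hcast : ((n + 1 : ℕ) : ℝ) = (n : ℝ) + 1 := by push_cast; ring
      rw [hcast]
      refine le_of_mul_le_mul_right ?_ hn1pos
      calc 4 * (a * (1 - a)) * ((((n : ℝ) + 1) + 1 - (1/2 - a) ^ 2 * ((n : ℝ) + 1)))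
            * (P (1/2) (n + 1 + 1)) ^ 2 * ((n : ℝ) + 1)
          ≤ 4 * (a * (1 - a)) * (P (1/2) (n + 1)) ^ 2 * (((n : ℝ) + 2)
            * (((n : ℝ) + 1) * ((n : ℝ) + 2) + a * (1 - a))
            * (((n : ℝ) + 1) - (1/2 - a) ^ 2 * n)) := by
            have := key1
            linarith [key1]
        _ ≤ ((n : ℝ) + 1 + 1) * (P a (n + 1 + 1) * P (1 - a) (n + 1 + 1)) * ((n : ℝ) + 1) :=
            key2
        _ = ((n : ℝ) + 1 + 1) * (P a (n + 1 + 1) * P (1 - a) (n + 1 + 1)) * ((n : ℝ) + 1) := rfl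

/-- Termwise lower: `2 a D_{n+1} ≤ C_{n+1}`. -/
lemma termwise_lower {a : ℝ} (ha0 : 0 < a) (ha1 : a ≤ 1 / 2) (n : ℕ) :
    2 * a * (P (1 / 2) (n + 1)) ^ 2 ≤ P a (n + 1) * P (1 - a) (n + 1) := by
  have h := lower_claim ha0 ha1 n
  have hnn : (0 : ℝ) ≤ (n : ℝ) := Nat.cast_nonneg n
  have hDpos : 0 < (P (1 / 2) (n + 1)) ^ 2 := by
    have := P_pos (show (0:ℝ) < 1/2 by norm_num) (n + 1)
    positivity
  have hfac : 2 * a * ((n : ℝ) + 1)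
      ≤ 4 * (a * (1 - a)) * (((n : ℝ) + 1) - (1/2 - a) ^ 2 * n) := by
    nlinarith [mul_nonneg (mul_nonneg ha0.le (by linarith : (0:ℝ) ≤ 1/2 - a)) hnn,
      mul_nonneg ha0.le (by linarith : (0:ℝ) ≤ 1/2 - a),
      mul_nonneg (mul_nonneg (mul_nonneg ha0.le (by linarith : (0:ℝ) ≤ 1/2 - a)) hnn)
        (by linarith : (0:ℝ) ≤ 1/2 - a),
      mul_nonneg (mul_nonneg (mul_nonneg (mul_nonneg ha0.le
        (by linarith : (0:ℝ) ≤ 1/2 - a)) hnn) (by linarith : (0:ℝ) ≤ 1/2 - a))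
        (by linarith : (0:ℝ) ≤ 1/2 + a)]
  have hn1pos : (0 : ℝ) < (n : ℝ) + 1 := by positivity
  refine le_of_mul_le_mul_left ?_ hn1pos
  calc ((n : ℝ) + 1) * (2 * a * (P (1 / 2) (n + 1)) ^ 2)
      = (2 * a * ((n : ℝ) + 1)) * (P (1 / 2) (n + 1)) ^ 2 := by ring
    _ ≤ (4 * (a * (1 - a)) * (((n : ℝ) + 1) - (1/2 - a) ^ 2 * n)) * (P (1 / 2) (n + 1)) ^ 2 :=
        mul_le_mul_of_nonneg_right hfac hDpos.le
    _ ≤ ((n : ℝ) + 1) * (P a (n + 1) * P (1 - a) (n + 1)) := h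

/-- Termwise upper: `(n+1) C_{n+1} ≤ a (n+1)! (n+1)!`. -/
lemma termwise_upper {a : ℝ} (ha0 : 0 < a) (ha1 : a ≤ 1 / 2) (n : ℕ) :
    ((n : ℝ) + 1) * (P a (n + 1) * P (1 - a) (n + 1))
      ≤ a * (((n + 1).factorial : ℝ) * (n + 1).factorial) := by
  have h := upper_claim ha0 ha1 n
  have hfac : ((n + 1).factorial : ℝ) = ((n : ℝ) + 1) * n.factorial := by
    push_cast [Nat.factorial_succ]; ring
  have hfpos : (0 : ℝ) < n.factorial := by exact_mod_cast n.factorial_pos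
  have hf1pos : (0 : ℝ) < (n + 1).factorial := by exact_mod_cast (n + 1).factorial_pos
  calc ((n : ℝ) + 1) * (P a (n + 1) * P (1 - a) (n + 1))
      ≤ a * (((n : ℝ) + 1) - a) * n.factorial * (n + 1).factorial := h
    _ ≤ a * (((n : ℝ) + 1)) * n.factorial * (n + 1).factorial := by
        nlinarith [mul_nonneg (mul_nonneg (sq_nonneg a) hfpos.le) hf1pos.le]
    _ = a * (((n + 1).factorial : ℝ) * (n + 1).factorial) := by rw [hfac]; ring

end Stmt18Aux

open Stmt18Aux in
theorem stmt_18 (a r : ℝ) (ha : a ∈ Set.Ioc (0 : ℝ) (1 / 2)) (hr : r ∈ Set.Ioo (0 : ℝ) 1) :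
    a ^ 2 * (4 * (Ea (1 / 2) r - (1 - r ^ 2) * Ka (1 / 2) r) - Real.pi * r ^ 2) ≤
      Ea a r - (1 - r ^ 2) * Ka a r - Real.pi / 2 * a * r ^ 2 ∧
    Ea a r - (1 - r ^ 2) * Ka a r - Real.pi / 2 * a * r ^ 2 ≤
      Real.pi / 2 * a ^ 2 *
        (r ^ 2 + 2 * (1 - r ^ 2) * Real.log (Real.sqrt (1 - r ^ 2))) := by
  obtain ⟨ha0, ha1⟩ := ha
  obtain ⟨hr0, hr1⟩ := hr
  set x : ℝ := r ^ 2 with hx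
  have hx0 : 0 < x := by positivity
  have hx1 : x < 1 := by rw [hx]; nlinarith
  have hpi : 0 < Real.pi := Real.pi_pos
  have Hmid0 := middle_hasSum (a := a) (x := x) ha0 (by linarith) hx0.le hx1
  have Hmid : HasSum (fun n : ℕ => Real.pi / 2 * (a * (P a (n + 1) * P (1 - a) (n + 1)) *
        (x ^ (n + 2) / (((n : ℝ) + 2) * (((n + 1).factorial : ℝ) * (n + 1).factorial)))))
      (Ea a r - (1 - r ^ 2) * Ka a r - Real.pi / 2 * a * r ^ 2) := by
    have h := Hmid0.mul_left (Real.pi / 2)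
    have hval : Real.pi / 2 * (hypergeom (a - 1) (1 - a) 1 x
          - (1 - x) * hypergeom a (1 - a) 1 x - a * x)
        = Ea a r - (1 - r ^ 2) * Ka a r - Real.pi / 2 * a * r ^ 2 := by
      simp only [Ea, Ka, ← hx]
      ring
    rwa [hval] at h
  have Hhalf0 := middle_hasSum (a := (1/2 : ℝ)) (x := x) (by norm_num) (by norm_num)
    hx0.le hx1
  have Hlow : HasSum (fun n : ℕ => 2 * Real.pi * a ^ 2 *
        ((1 / 2 : ℝ) * (P (1/2) (n + 1) * P (1 - (1/2 : ℝ)) (n + 1)) *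
        (x ^ (n + 2) / (((n : ℝ) + 2) * (((n + 1).factorial : ℝ) * (n + 1).factorial)))))
      (a ^ 2 * (4 * (Ea (1 / 2) r - (1 - r ^ 2) * Ka (1 / 2) r) - Real.pi * r ^ 2)) := by
    have h := Hhalf0.mul_left (2 * Real.pi * a ^ 2)
    have hval : 2 * Real.pi * a ^ 2 * (hypergeom ((1:ℝ)/2 - 1) (1 - (1:ℝ)/2) 1 x
          - (1 - x) * hypergeom (1/2 : ℝ) (1 - (1:ℝ)/2) 1 x - (1/2 : ℝ) * x)
        = a ^ 2 * (4 * (Ea (1 / 2) r - (1 - r ^ 2) * Ka (1 / 2) r) - Real.pi * r ^ 2) := by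
      simp only [Ea, Ka, ← hx]
      ring
    rwa [hval] at h
  have Hup0 := log_series (x := x) hx0.le hx1
  have Hup : HasSum (fun n : ℕ => Real.pi / 2 * a ^ 2 *
        (x ^ (n + 2) / (((n : ℝ) + 1) * ((n : ℝ) + 2))))
      (Real.pi / 2 * a ^ 2 *
        (r ^ 2 + 2 * (1 - r ^ 2) * Real.log (Real.sqrt (1 - r ^ 2)))) := by
    have h := Hup0.mul_left (Real.pi / 2 * a ^ 2)
    have hlog : Real.log (Real.sqrt (1 - x)) = Real.log (1 - x) / 2 :=
      Real.log_sqrt (by linarith)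
    have hval : Real.pi / 2 * a ^ 2 * (x + (1 - x) * Real.log (1 - x))
        = Real.pi / 2 * a ^ 2 *
          (r ^ 2 + 2 * (1 - r ^ 2) * Real.log (Real.sqrt (1 - r ^ 2))) := by
      rw [← hx, hlog]; ring
    rwa [hval] at h
  constructor
  · refine hasSum_le (fun n => ?_) Hlow Hmid
    have hf1pos : (0 : ℝ) < (n + 1).factorial := by exact_mod_cast (n + 1).factorial_pos
    have h := termwise_lower ha0 ha1 n
    have h2 : (0:ℝ) ≤ Real.pi * a / 2 *
        (x ^ (n + 2) / (((n : ℝ) + 2) * (((n + 1).factorial : ℝ) * (n + 1).factorial))) := by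
      positivity
    have h3 := mul_le_mul_of_nonneg_right h h2
    have hhalf : P (1 - (1/2 : ℝ)) (n + 1) = P (1/2 : ℝ) (n + 1) := by norm_num
    calc 2 * Real.pi * a ^ 2 *
          ((1 / 2 : ℝ) * (P (1/2) (n + 1) * P (1 - (1/2 : ℝ)) (n + 1)) *
          (x ^ (n + 2) / (((n : ℝ) + 2) * (((n + 1).factorial : ℝ) * (n + 1).factorial))))
        = (2 * a * (P (1/2) (n + 1)) ^ 2) * (Real.pi * a / 2 *
          (x ^ (n + 2) / (((n : ℝ) + 2) * (((n + 1).factorial : ℝ) * (n + 1).factorial)))) := by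
          rw [hhalf]; ring
      _ ≤ (P a (n + 1) * P (1 - a) (n + 1)) * (Real.pi * a / 2 *
          (x ^ (n + 2) / (((n : ℝ) + 2) * (((n + 1).factorial : ℝ) * (n + 1).factorial)))) := h3
      _ = Real.pi / 2 * (a * (P a (n + 1) * P (1 - a) (n + 1)) *
          (x ^ (n + 2) / (((n : ℝ) + 2) * (((n + 1).factorial : ℝ) * (n + 1).factorial)))) := by
          ring
  · refine hasSum_le (fun n => ?_) Hmid Hup
    have hf1pos : (0 : ℝ) < (n + 1).factorial := by exact_mod_cast (n + 1).factorial_pos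
    have hn1 : (0:ℝ) < (n : ℝ) + 1 := by positivity
    have hn2 : (0:ℝ) < (n : ℝ) + 2 := by positivity
    have h := termwise_upper ha0 ha1 n
    have hK : (0:ℝ) ≤ Real.pi * a * x ^ (n + 2) /
        (2 * (((n : ℝ) + 1) * (((n : ℝ) + 2) * (((n + 1).factorial : ℝ) * (n + 1).factorial)))) := by
      positivity
    have h3 := mul_le_mul_of_nonneg_right h hK
    calc Real.pi / 2 * (a * (P a (n + 1) * P (1 - a) (n + 1)) *
          (x ^ (n + 2) / (((n : ℝ) + 2) * (((n + 1).factorial : ℝ) * (n + 1).factorial))))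
        = (((n : ℝ) + 1) * (P a (n + 1) * P (1 - a) (n + 1))) *
          (Real.pi * a * x ^ (n + 2) /
          (2 * (((n : ℝ) + 1) * (((n : ℝ) + 2) * (((n + 1).factorial : ℝ) * (n + 1).factorial))))) := by
          field_simp
      _ ≤ (a * (((n + 1).factorial : ℝ) * (n + 1).factorial)) *
          (Real.pi * a * x ^ (n + 2) /
          (2 * (((n : ℝ) + 1) * (((n : ℝ) + 2) * (((n + 1).factorial : ℝ) * (n + 1).factorial))))) := h3
      _ = Real.pi / 2 * a ^ 2 * (x ^ (n + 2) / (((n : ℝ) + 1) * ((n : ℝ) + 2))) := by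
          field_simp
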